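/- arXiv:2402.11567 — 2 statements merged into one kernel-verified Lean document; each statement's English description precedes it below -/
import Mathlib

section
/- Let A, B be r₊×r₀ complex matrices and suppose there exists an r₀×r₀ unitary matrix W such that for every column index s, either the s-th column of AW is a real scalar multiple of the s-th column of BW, or both columns are zero; or the s-th column of BW is a real scalar multiple of the s-th column of AW. Then AB† − BA† = 0. -/
/-!
Since `W Wᴴ = 1`, `A Bᴴ = (A W)(B W)ᴴ`, and this is a sum over the columns `s` of the rank-one
terms `(A W)ₛ (B W)ₛᴴ`. When one column is a real multiple of the other, that term is unchanged
by swapping the roles of `A` and `B`, so `A Bᴴ = B Aᴴ`.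
-/

open Matrix

section ColumnProportional

variable {R : Type*} [CommSemiring R] [StarRing R]

theorem mul_star_eq_of_eq_selfAdjoint_mul {ι : Type*} {c : R} (hc : IsSelfAdjoint c)
    {u v : ι → R} (h : ∀ i, u i = c * v i) (i j : ι) :
    u i * star (v j) = v i * star (u j) := by
  rw [h i, h j, star_mul', hc.star_eq]
  ring

variable {m n : Type*} [Fintype n]

theorem Matrix.mul_conjTranspose_comm_of_col_proportional (P Q : Matrix m n R)
    (h : ∀ s, ∃ c : R, IsSelfAdjoint c ∧
      ((∀ i, P i s = c * Q i s) ∨ ∀ i, Q i s = c * P i s)) :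
    P * Qᴴ = Q * Pᴴ := by
  ext i j
  simp only [mul_apply, conjTranspose_apply]
  refine Finset.sum_congr rfl fun s _ => ?_
  obtain ⟨c, hc, hPQ | hQP⟩ := h s
  · exact mul_star_eq_of_eq_selfAdjoint_mul hc hPQ i j
  · exact (mul_star_eq_of_eq_selfAdjoint_mul hc hQP i j).symm

end ColumnProportional

theorem Matrix.mul_mul_conjTranspose_mul_of_mul_conjTranspose_eq_one {α l m n : Type*}
    [Fintype m] [DecidableEq m] [Fintype n] [Semiring α] [StarRing α]
    (A : Matrix l m α) (B : Matrix n m α) {W : Matrix m m α} (hW : W * Wᴴ = 1) :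
    A * W * (B * W)ᴴ = A * Bᴴ := by
  rw [conjTranspose_mul, Matrix.mul_assoc, ← Matrix.mul_assoc W, hW, Matrix.one_mul]

/-- If there is a unitary W such that each column of AW is a real multiple of the
corresponding column of BW (or both columns vanish, or vice versa), then AB† − BA† = 0. -/
theorem stmt_4 {rp r0 : ℕ} (A B : Matrix (Fin rp) (Fin r0) ℂ)
    (W : Matrix (Fin r0) (Fin r0) ℂ) (hW : Wᴴ * W = 1 ∧ W * Wᴴ = 1)
    (hcols : ∀ s : Fin r0,
      (∃ lam : ℝ, ∀ i, (A * W) i s = (lam : ℂ) * (B * W) i s) ∨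
      (∃ lam : ℝ, ∀ i, (B * W) i s = (lam : ℂ) * (A * W) i s) ∨
      ((∀ i, (A * W) i s = 0) ∧ (∀ i, (B * W) i s = 0))) :
    A * Bᴴ - B * Aᴴ = 0 := by
  have hprop : ∀ s, ∃ c : ℂ, IsSelfAdjoint c ∧
      ((∀ i, (A * W) i s = c * (B * W) i s) ∨ ∀ i, (B * W) i s = c * (A * W) i s) := by
    intro s
    rcases hcols s with ⟨lam, h⟩ | ⟨lam, h⟩ | ⟨hA, -⟩
    · exact ⟨lam, Complex.conj_ofReal lam, .inl h⟩
    · exact ⟨lam, Complex.conj_ofReal lam, .inr h⟩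
    · exact ⟨0, .zero _, .inl fun i => by rw [hA i, zero_mul]⟩
  rw [sub_eq_zero,
    ← mul_mul_conjTranspose_mul_of_mul_conjTranspose_eq_one A B hW.2,
    ← mul_mul_conjTranspose_mul_of_mul_conjTranspose_eq_one B A hW.2]
  exact mul_conjTranspose_comm_of_col_proportional _ _ hprop
end

section
/- Let V, Y be matrix-valued differentiable functions on an open set Θ ⊆ ℝ with V(θ) ∈ ℂ^{n×r₊} and Y(θ) ∈ ℂ^{n×r₀} such that V†V = I, Y†Y = I, and V†Y = 0 for all θ (so [V Y] is unitary when r₊ + r₀ = n). Let U(θ) ∈ ℂ^{r₊×r₊} be a differentiable unitary-valued function satisfying the matrix ODE/PDE ∂U = U(V†∂V), and set Ṽ = VU†. Then P₊ ∂Ṽ = 0, where P₊ = VV†; equivalently, ∂Ṽ = YY† ∂Ṽ. -/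
open Matrix

/-- If V, Y are differentiable isometries with V†V = I, Y†Y = I, V†Y = 0,
VV† + YY† = I, and U is a differentiable unitary solving ∂U = U(V†∂V), then Ṽ = VU† satisfies
P₊ ∂Ṽ = 0 where P₊ = VV† (equivalently ∂Ṽ = YY† ∂Ṽ). -/
theorem stmt_11 {n rp r0 : ℕ} (Θ : Set ℝ) (hΘ : IsOpen Θ)
    (V V' : ℝ → Matrix (Fin n) (Fin rp) ℂ) (Y : ℝ → Matrix (Fin n) (Fin r0) ℂ)
    (U U' : ℝ → Matrix (Fin rp) (Fin rp) ℂ)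
    (hVderiv : ∀ θ ∈ Θ, ∀ i j, HasDerivAt (fun t => V t i j) (V' θ i j) θ)
    (hUderiv : ∀ θ ∈ Θ, ∀ i j, HasDerivAt (fun t => U t i j) (U' θ i j) θ)
    (hViso : ∀ θ ∈ Θ, (V θ)ᴴ * V θ = 1)
    (hYiso : ∀ θ ∈ Θ, (Y θ)ᴴ * Y θ = 1)
    (horth : ∀ θ ∈ Θ, (V θ)ᴴ * Y θ = 0)
    (hres : ∀ θ ∈ Θ, V θ * (V θ)ᴴ + Y θ * (Y θ)ᴴ = 1)
    (hUunit : ∀ θ ∈ Θ, (U θ)ᴴ * U θ = 1 ∧ U θ * (U θ)ᴴ = 1)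
    (hODE : ∀ θ ∈ Θ, U' θ = U θ * ((V θ)ᴴ * V' θ)) :
    ∀ θ ∈ Θ,
      (V θ * (V θ)ᴴ) * (V' θ * (U θ)ᴴ + V θ * (U' θ)ᴴ) = 0 ∧
      (V' θ * (U θ)ᴴ + V θ * (U' θ)ᴴ) =
        (Y θ * (Y θ)ᴴ) * (V' θ * (U θ)ᴴ + V θ * (U' θ)ᴴ) := by
  intro θ hθ
  -- skew-symmetry: V†V' + V'†V = 0
  have hskew : (V θ)ᴴ * V' θ + (V' θ)ᴴ * V θ = 0 := by
    ext i j
    have h1 : HasDerivAt (fun t => ((V t)ᴴ * V t) i j)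
        (((V θ)ᴴ * V' θ + (V' θ)ᴴ * V θ) i j) θ := by
      have : HasDerivAt (fun t => ∑ k, star (V t k i) * V t k j)
          (∑ k, (star (V' θ k i) * V θ k j + star (V θ k i) * V' θ k j)) θ := by
        apply HasDerivAt.fun_sum
        intro k _
        exact ((hVderiv θ hθ k i).star).mul (hVderiv θ hθ k j)
      have heq : (fun t => ((V t)ᴴ * V t) i j) = fun t => ∑ k, star (V t k i) * V t k j := by
        funext t
        simp [Matrix.mul_apply, Matrix.conjTranspose_apply]
      rw [heq]
      convert this using 1
      simp [Matrix.add_apply, Matrix.mul_apply, Matrix.conjTranspose_apply, Finset.sum_add_distrib]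
      exact add_comm _ _
    have h2 : HasDerivAt (fun t => ((V t)ᴴ * V t) i j) 0 θ := by
      have hev : (fun t => ((V t)ᴴ * V t) i j) =ᶠ[nhds θ] fun _ => (1 : Matrix (Fin rp) (Fin rp) ℂ) i j := by
        filter_upwards [hΘ.mem_nhds hθ] with t ht
        rw [hViso t ht]
      exact (hasDerivAt_const θ _).congr_of_eventuallyEq hev
    have := h1.unique h2
    simpa using this
  have hU'dag : (U' θ)ᴴ = (V' θ)ᴴ * V θ * (U θ)ᴴ := by
    rw [hODE θ hθ]
    simp [Matrix.conjTranspose_mul, mul_assoc]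
  have key : (V θ * (V θ)ᴴ) * (V' θ * (U θ)ᴴ + V θ * (U' θ)ᴴ) = 0 := by
    rw [hU'dag]
    have : (V θ * (V θ)ᴴ) * (V' θ * (U θ)ᴴ + V θ * ((V' θ)ᴴ * V θ * (U θ)ᴴ))
        = V θ * (((V θ)ᴴ * V' θ + (V' θ)ᴴ * V θ) * (U θ)ᴴ) := by
      have hV : (V θ)ᴴ * V θ = 1 := hViso θ hθ
      calc (V θ * (V θ)ᴴ) * (V' θ * (U θ)ᴴ + V θ * ((V' θ)ᴴ * V θ * (U θ)ᴴ))
          = V θ * ((V θ)ᴴ * V' θ) * (U θ)ᴴ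
            + V θ * (((V θ)ᴴ * V θ) * ((V' θ)ᴴ * V θ * (U θ)ᴴ)) := by
            rw [Matrix.mul_add]; simp [Matrix.mul_assoc]
        _ = V θ * (((V θ)ᴴ * V' θ + (V' θ)ᴴ * V θ) * (U θ)ᴴ) := by
            rw [hV, one_mul, Matrix.add_mul, Matrix.mul_add]
            simp [Matrix.mul_assoc]
    rw [this, hskew, Matrix.zero_mul, Matrix.mul_zero]
  refine ⟨key, ?_⟩
  have := hres θ hθ
  calc (V' θ * (U θ)ᴴ + V θ * (U' θ)ᴴ)
      = (V θ * (V θ)ᴴ + Y θ * (Y θ)ᴴ) * (V' θ * (U θ)ᴴ + V θ * (U' θ)ᴴ) := by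
        rw [this, Matrix.one_mul]
    _ = (Y θ * (Y θ)ᴴ) * (V' θ * (U θ)ᴴ + V θ * (U' θ)ᴴ) := by
        rw [Matrix.add_mul, key, zero_add]
end
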